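/- Let (Q, f) be a triangulation quiver with at least three vertices, and let β be an arrow with n_β = 3 and n_{β̄} = 3. Then β does not belong to a 2-cycle: there is no arrow γ with s(γ) = t(β) and t(γ) = s(β). (Step in the proof of Lemma 6.6, implication (iv) ⇒ (i).) -/

import Mathlib

/-! The return arrow `γ` starts at `t β`, so it is `f β` or `g β = \overline{f β}`. In each case
`f³ = id` and the relations `g³ β = β`, `g β ≠ β`, `g² β ≠ β`, `g β̄ ≠ β̄` coming from
`n_β = n_{β̄} = 3` produce an arrow `p` such that `p̄` and `g p` both end at `s p`.
Then every arrow leaving `{s p, t p}` returns to it, and since each arrow `a` closes up the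
triangle `a, f a, f² a`, so does every arrow entering it; by connectedness `Q` has at most
two vertices. -/

/-- A triangulation quiver: a finite connected 2-regular quiver `(V, A, s, t)` together
with a permutation `f` of the arrows satisfying `s (f a) = t a` and `f ∘ f ∘ f = id`.
The field `bar` records, for each arrow `a`, the unique arrow `ᾱ ≠ α` with the same
source (it exists and is unique by 2-regularity), together with its defining properties. -/
structure TriangulationQuiver where
  V : Type
  A : Type
  fintypeV : Fintype V
  fintypeA : Fintype A
  s : A → V
  t : A → V
  two_regular_src : ∀ v : V, Set.ncard {a : A | s a = v} = 2
  two_regular_tgt : ∀ v : V, Set.ncard {a : A | t a = v} = 2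
  connected : ∀ u v : V,
    Relation.ReflTransGen (fun x y => ∃ a : A, (s a = x ∧ t a = y) ∨ (s a = y ∧ t a = x)) u v
  f : A → A
  f_cube : ∀ a : A, f (f (f a)) = a
  s_f : ∀ a : A, s (f a) = t a
  bar : A → A
  bar_src : ∀ a : A, s (bar a) = s a
  bar_ne : ∀ a : A, bar a ≠ a
  bar_unique : ∀ a b : A, s b = s a → b ≠ a → b = bar a

attribute [instance] TriangulationQuiver.fintypeV TriangulationQuiver.fintypeA

namespace TriangulationQuiver

variable (Q : TriangulationQuiver)

/-- The second permutation of arrows: `g α = \overline{f α}`. -/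
def g (a : Q.A) : Q.A := Q.bar (Q.f a)

/-- The `g`-orbit of an arrow. -/
def gOrbit (a : Q.A) : Set Q.A := {b : Q.A | ∃ k : ℕ, Q.g^[k] a = b}

/-- `n α` is the number of arrows in the `g`-orbit of `α`. -/
noncomputable def n (a : Q.A) : ℕ := (Q.gOrbit a).ncard

end TriangulationQuiver

theorem Function.ncard_range_iterate_eq_minimalPeriod {α : Type*} {f : α → α} {x : α}
    (hx : x ∈ Function.periodicPts f) :
    (Set.range fun k => f^[k] x).ncard = Function.minimalPeriod f x := by
  have hrange : (Set.range fun k => f^[k] x) =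
      (fun k => f^[k] x) '' Set.Iio (Function.minimalPeriod f x) := by
    refine Set.Subset.antisymm ?_ (Set.image_subset_range _ _)
    rintro _ ⟨k, rfl⟩
    exact ⟨k % Function.minimalPeriod f x,
      Nat.mod_lt _ (Function.minimalPeriod_pos_of_mem_periodicPts hx),
      Function.iterate_mod_minimalPeriod_eq⟩
  rw [hrange, Function.iterate_injOn_Iio_minimalPeriod.ncard_image, Set.ncard_Iio_nat]

namespace TriangulationQuiver

variable (Q : TriangulationQuiver)

theorem bar_bar (a : Q.A) : Q.bar (Q.bar a) = a :=
  (Q.bar_unique (Q.bar a) a (Q.bar_src a).symm (Q.bar_ne a).symm).symm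

theorem eq_or_eq_bar_of_s_eq {a b : Q.A} (h : Q.s b = Q.s a) : b = a ∨ b = Q.bar a :=
  or_iff_not_imp_left.mpr (Q.bar_unique a b h)

theorem f_injective : Function.Injective Q.f :=
  fun a b h => by simpa only [Q.f_cube] using congrArg (fun x => Q.f (Q.f x)) h

theorem g_injective : Function.Injective Q.g :=
  (Function.LeftInverse.injective Q.bar_bar).comp Q.f_injective

theorem s_g (a : Q.A) : Q.s (Q.g a) = Q.t a := by
  rw [g, bar_src, s_f]

theorem t_f_f (a : Q.A) : Q.t (Q.f (Q.f a)) = Q.s a := by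
  rw [← s_f, f_cube]

/-- `f` maps the arrows ending at a vertex injectively to the two arrows starting there. -/
theorem eq_or_eq_of_t_eq {u w z : Q.A} (hw : Q.t w = Q.t u) (hz : Q.t z = Q.t u)
    (hne : u ≠ w) : z = u ∨ z = w := by
  have hfw : Q.f w = Q.bar (Q.f u) :=
    Q.bar_unique _ _ (by rw [s_f, s_f, hw]) (Q.f_injective.ne hne.symm)
  rcases Q.eq_or_eq_bar_of_s_eq (a := Q.f u) (b := Q.f z) (by rw [s_f, s_f, hz]) with h | h
  · exact Or.inl (Q.f_injective h)
  · exact Or.inr (Q.f_injective (h.trans hfw.symm))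

theorem eq_univ_of_forall_t_mem {S : Set Q.V} (hS : S.Nonempty)
    (hout : ∀ a, Q.s a ∈ S → Q.t a ∈ S) : S = Set.univ := by
  have hin : ∀ a, Q.t a ∈ S → Q.s a ∈ S := fun a ha => by
    rw [← t_f_f]
    exact hout _ (by rw [s_f]; exact hout _ (by rwa [s_f]))
  obtain ⟨x, hx⟩ := hS
  refine Set.eq_univ_of_forall fun v => ?_
  induction Q.connected x v with
  | refl => exact hx
  | tail _ hstep ih =>
    obtain ⟨a, ⟨rfl, rfl⟩ | ⟨rfl, rfl⟩⟩ := hstep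
    exacts [hout a ih, hin a ih]

theorem n_eq_minimalPeriod (a : Q.A) : Q.n a = Function.minimalPeriod Q.g a :=
  Function.ncard_range_iterate_eq_minimalPeriod (Q.g_injective.mem_periodicPts a)

theorem g_g_g_eq_of_n_eq_three {a : Q.A} (h : Q.n a = 3) : Q.g (Q.g (Q.g a)) = a := by
  have hper := Function.iterate_minimalPeriod (f := Q.g) (x := a)
  rwa [← n_eq_minimalPeriod, h] at hper

theorem g_ne_of_n_eq_three {a : Q.A} (h : Q.n a = 3) : Q.g a ≠ a :=
  Function.not_isPeriodicPt_of_pos_of_lt_minimalPeriod (f := Q.g) (x := a) (n := 1) one_ne_zero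
    (by rw [← n_eq_minimalPeriod, h]; norm_num)

theorem g_g_ne_of_n_eq_three {a : Q.A} (h : Q.n a = 3) : Q.g (Q.g a) ≠ a :=
  Function.not_isPeriodicPt_of_pos_of_lt_minimalPeriod (f := Q.g) (x := a) (n := 2) two_ne_zero
    (by rw [← n_eq_minimalPeriod, h]; norm_num)

/-- The only arrow leaving `{s p, t p}` that is not among `p, p̄, g p` is `f p`, and `f² p`
ends at `s p`, hence is `p̄` or `g p`. -/
theorem card_V_le_two_of_t_bar_eq_of_t_g_eq {p : Q.A} (hbar : Q.t (Q.bar p) = Q.s p)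
    (hg : Q.t (Q.g p) = Q.s p) (hne : Q.g p ≠ Q.bar p) : Fintype.card Q.V ≤ 2 := by
  have hclosed : ∀ a, Q.s a ∈ ({Q.s p, Q.t p} : Set Q.V) →
      Q.t a ∈ ({Q.s p, Q.t p} : Set Q.V) := by
    rintro a (ha | ha)
    · rcases Q.eq_or_eq_bar_of_s_eq ha with rfl | rfl
      exacts [Or.inr rfl, Or.inl hbar]
    · rcases Q.eq_or_eq_bar_of_s_eq (a := Q.f p) (by rw [ha, s_f]) with rfl | rfl
      · rw [← Q.s_f (Q.f p)]
        rcases Q.eq_or_eq_of_t_eq (hg.trans hbar.symm) ((Q.t_f_f p).trans hbar.symm) hne.symm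
          with h | h <;> rw [h]
        exacts [Or.inl (Q.bar_src p), Or.inr (Q.s_g p)]
      · exact Or.inl hg
  have huniv := Q.eq_univ_of_forall_t_mem ⟨_, Set.mem_insert _ _⟩ hclosed
  calc Fintype.card Q.V = (Set.univ : Set Q.V).ncard := by simp
    _ ≤ 2 := huniv ▸ (Set.ncard_insert_le _ _).trans (by simp)

end TriangulationQuiver

/-- Step in the proof of Lemma 6.6, (iv) ⇒ (i): in a triangulation quiver with at least
three vertices, an arrow `β` with `n_β = 3` and `n_{β̄} = 3` does not belong to a
2-cycle: there is no arrow `γ` with `s(γ) = t(β)` and `t(γ) = s(β)`. -/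
theorem stmt_5 (Q : TriangulationQuiver) (h3 : 3 ≤ Fintype.card Q.V)
    (b : Q.A) (hb : Q.n b = 3) (hbb : Q.n (Q.bar b) = 3) :
    ¬ ∃ c : Q.A, Q.s c = Q.t b ∧ Q.t c = Q.s b := by
  rintro ⟨c, hcs, hct⟩
  have hg3 := Q.g_g_g_eq_of_n_eq_three hb
  have hg2 := Q.g_g_ne_of_n_eq_three hb
  suffices Fintype.card Q.V ≤ 2 by omega
  have hc : c = Q.f b ∨ c = Q.g b := Q.eq_or_eq_bar_of_s_eq (hcs.trans (Q.s_f b).symm)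
  rcases hc with rfl | rfl
  · rcases Q.eq_or_eq_bar_of_s_eq (a := b) (b := Q.f (Q.f b)) (by rw [Q.s_f, hct])
      with hff | hff
    · have hfb : Q.f b = b := by simpa only [Q.f_cube] using (congrArg Q.f hff).symm
      have hgb : Q.g b = Q.bar b := by rw [TriangulationQuiver.g, hfb]
      refine Q.card_V_le_two_of_t_bar_eq_of_t_g_eq (p := Q.bar b) ?_ ?_ ?_
      · rw [Q.bar_bar, Q.bar_src, ← Q.s_f, hfb]
      · rw [Q.bar_src, ← Q.s_g, ← hgb, hg3]
      · rwa [Q.bar_bar, ← hgb]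
    · refine absurd ?_ (Q.g_ne_of_n_eq_three hbb)
      rw [TriangulationQuiver.g, ← hff, Q.f_cube, hff]
  · have hgg : Q.g (Q.g b) = Q.bar b :=
      (Q.eq_or_eq_bar_of_s_eq (by rw [Q.s_g]; exact hct)).resolve_left hg2
    refine Q.card_V_le_two_of_t_bar_eq_of_t_g_eq ?_ hct fun h => hg2 ?_
    · rw [← Q.s_g, ← hgg, hg3]
    · rw [h, ← hgg, hg3]
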